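/- If a finite poset P is both ε-graded and μ-graded, then W(P,μ;t) = t^{(r(ε)-r(μ))/2} · W(P,ε;t). -/

import Mathlib

open Polynomial

variable {P : Type*}

/-- The ε-weight of a chain `x₀ ⋖ x₁ ⋖ ⋯ ⋖ xₙ`, recorded as a list:
the sum `Σ ε(x_{i-1}, x_i)` over consecutive pairs. -/
def chainWeight (ε : P → P → ℤ) (c : List P) : ℤ :=
  ((c.zip c.tail).map fun q => ε q.1 q.2).sum

/-- A (nonempty) saturated chain of the poset `P`, as a list of elements with
each member covered by the next. -/
def IsSatChain [PartialOrder P] (c : List P) : Prop :=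
  c ≠ [] ∧ c.Chain' (· ⋖ ·)

/-- A maximal chain: a saturated chain starting at a minimal element and
ending at a maximal element. -/
def IsMaxChainL [PartialOrder P] (c : List P) : Prop :=
  IsSatChain c ∧ (∀ x ∈ c.head?, IsMin x) ∧ (∀ x ∈ c.getLast?, IsMax x)

/-- A saturated chain starting at a minimal element of `P` and ending at `x`. -/
def IsSatChainFromMinTo [PartialOrder P] (x : P) (c : List P) : Prop :=
  IsSatChain c ∧ (∀ y ∈ c.head?, IsMin y) ∧ c.getLast? = some x

/-- `ε` takes only the values `1` and `-1` on covering relations. -/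
def IsSignLabeling [PartialOrder P] (ε : P → P → ℤ) : Prop :=
  ∀ x y : P, x ⋖ y → ε x y = 1 ∨ ε x y = -1

/-- `P` is `ε`-graded of rank `r`: every maximal chain has ε-weight `r`. -/
def IsEGraded [PartialOrder P] (ε : P → P → ℤ) (r : ℤ) : Prop :=
  ∀ c : List P, IsMaxChainL c → chainWeight ε c = r

/-- A `(P,ε)`-partition: an order-reversing map `σ : P → {1,2,…}` which is
strict on covering relations labeled `-1`. -/
def IsPPartition [PartialOrder P] (ε : P → P → ℤ) (σ : P → ℤ) : Prop :=
  (∀ x, 1 ≤ σ x) ∧ (∀ x y : P, x ≤ y → σ y ≤ σ x) ∧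
  (∀ x y : P, x ⋖ y → ε x y = -1 → σ y < σ x)

/-- `Ω(P,ε;n)`: the number of `(P,ε)`-partitions with largest part at most `n`. -/
noncomputable def OmegaCount [PartialOrder P] (ε : P → P → ℤ) (n : ℕ) : ℕ :=
  Nat.card {σ : P → ℤ // IsPPartition ε σ ∧ ∀ x, σ x ≤ (n : ℤ)}

/-!
Because all maximal chains have the same `ε`-weight, the `ε`-weight of a saturated chain from a
minimal element up to `x` is a well-defined rank `ρ_ε(x)`, vanishing on minimal and equal to
`r(ε)` on maximal elements; likewise `ρ_μ`. Both labelings take values `±1`, so `ρ_ε - ρ_μ` is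
even, and `d = (ρ_ε - ρ_μ)/2 - k` is `0` on maximal and `-k` on minimal elements, while along a
cover `x ⋖ y` it changes by `(ε(x,y) - μ(x,y))/2 ∈ {-1, 0, 1}`. That is exactly what makes
`σ ↦ σ + d` a bijection from `(P,μ)`-partitions with parts `≤ n + k` onto `(P,ε)`-partitions with
parts `≤ n`. So `Ω(P,μ;n+k) = Ω(P,ε;n)`, and `Ω(P,μ;n) = 0` for `n ≤ k`: the series of
`Ω(P,μ;n+1)` is `t^k` times that of `Ω(P,ε;n+1)`.
-/

theorem chainWeight_cons_cons (ε : P → P → ℤ) (a b : P) (t : List P) :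
    chainWeight ε (a :: b :: t) = ε a b + chainWeight ε (b :: t) := by
  simp [chainWeight]

theorem chainWeight_append_cons (ε : P → P → ℤ) (x : P) (t : List P) :
    ∀ c : List P, chainWeight ε (c ++ x :: t) = chainWeight ε (c ++ [x]) + chainWeight ε (x :: t)
  | [] => by simp [chainWeight]
  | [a] => by simp [chainWeight]
  | a :: b :: c => by
    simp only [List.cons_append, chainWeight_cons_cons]
    rw [← List.cons_append, chainWeight_append_cons ε x t (b :: c)]
    simp only [List.cons_append]
    ring

theorem chainWeight_append_singleton {ε : P → P → ℤ} {c : List P} {x : P}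
    (hc : c.getLast? = some x) (y : P) :
    chainWeight ε (c ++ [y]) = chainWeight ε c + ε x y := by
  obtain ⟨c, rfl⟩ := List.getLast?_eq_some_iff.mp hc
  rw [List.append_assoc, List.singleton_append, chainWeight_append_cons, chainWeight_cons_cons]
  simp [chainWeight]

section PartialOrder

variable [PartialOrder P] {ε μ : P → P → ℤ}

theorem even_chainWeight_sub (hsε : IsSignLabeling ε) (hsμ : IsSignLabeling μ) :
    ∀ c : List P, c.IsChain (· ⋖ ·) → Even (chainWeight ε c - chainWeight μ c)
  | [], _ | [_], _ => by simp [chainWeight]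
  | a :: b :: c, hch => by
    obtain ⟨hab, hch⟩ := List.isChain_cons_cons.mp hch
    have hc := even_chainWeight_sub hsε hsμ (b :: c) hch
    have hab : Even (ε a b - μ a b) := by
      rcases hsε a b hab with h | h <;> rcases hsμ a b hab with h' | h' <;> simp [h, h']
    rw [chainWeight_cons_cons, chainWeight_cons_cons, add_sub_add_comm]
    exact hab.add hc

theorem IsSatChainFromMinTo.append_covBy {x y : P} {c : List P} (hc : IsSatChainFromMinTo x c)
    (hxy : x ⋖ y) : IsSatChainFromMinTo y (c ++ [y]) := by
  obtain ⟨⟨hne, hch⟩, hmin, hlast⟩ := hc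
  obtain ⟨c, rfl⟩ := List.getLast?_eq_some_iff.mp hlast
  refine ⟨⟨by simp, ?_⟩, by rwa [List.head?_append_of_ne_nil _ hne], by simp⟩
  rw [List.append_assoc, List.singleton_append]
  exact List.isChain_split.mpr ⟨hch, List.isChain_pair.mpr hxy⟩

end PartialOrder

section Rank

variable [PartialOrder P] [Finite P]

theorem exists_le_isMax (x : P) : ∃ y, x ≤ y ∧ IsMax y := by
  simpa using Finite.exists_le_maximal (p := fun _ : P => True) trivial

theorem exists_isMin_le (x : P) : ∃ y, y ≤ x ∧ IsMin y := by
  simpa using Finite.exists_le_minimal (p := fun _ : P => True) trivial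

theorem exists_covBy_chain_of_le {x y : P} (h : x ≤ y) :
    ∃ t : List P, (x :: t).IsChain (· ⋖ ·) ∧ (x :: t).getLast (List.cons_ne_nil _ _) = y := by
  classical
  have := Fintype.ofFinite P
  have := Fintype.toLocallyFiniteOrder (α := P)
  exact List.exists_isChain_cons_of_relationReflTransGen (le_iff_reflTransGen_covBy.mp h)

theorem exists_isSatChainFromMinTo (x : P) : ∃ c, IsSatChainFromMinTo x c := by
  obtain ⟨m, hmx, hm⟩ := exists_isMin_le x
  obtain ⟨t, ht, hlast⟩ := exists_covBy_chain_of_le hmx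
  refine ⟨m :: t, ⟨List.cons_ne_nil _ _, ht⟩, by simpa using hm, ?_⟩
  rw [List.getLast?_eq_some_getLast (List.cons_ne_nil _ _), hlast]

/-- Both chains extend, by one and the same chain from `x` up to a maximal element, to maximal
chains, which all have weight `r`. -/
theorem IsEGraded.chainWeight_eq {ε : P → P → ℤ} {r : ℤ} (hgr : IsEGraded ε r) {x : P}
    {c d : List P} (hc : IsSatChainFromMinTo x c) (hd : IsSatChainFromMinTo x d) :
    chainWeight ε c = chainWeight ε d := by
  obtain ⟨m, hxm, hm⟩ := exists_le_isMax x
  obtain ⟨t, ht, hlast⟩ := exists_covBy_chain_of_le hxm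
  have key : ∀ e, IsSatChainFromMinTo x e → chainWeight ε e + chainWeight ε (x :: t) = r := by
    rintro e ⟨⟨hne, hch⟩, hmin, hlast'⟩
    obtain ⟨e, rfl⟩ := List.getLast?_eq_some_iff.mp hlast'
    rw [← chainWeight_append_cons]
    refine hgr _ ⟨⟨by simp, List.isChain_split.mpr ⟨hch, ht⟩⟩, ?_, ?_⟩
    · simpa [List.head?_append] using hmin
    · rw [List.getLast?_append_cons, List.getLast?_eq_some_getLast (List.cons_ne_nil _ _), hlast]
      simpa using hm
  linarith [key c hc, key d hd]

/-- The `ε`-rank of `x`: the `ε`-weight of a saturated chain from a minimal element to `x`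
(well defined when `P` is `ε`-graded). -/
noncomputable def weightedRank (ε : P → P → ℤ) (x : P) : ℤ :=
  chainWeight ε (exists_isSatChainFromMinTo x).choose

variable {ε : P → P → ℤ} {r : ℤ}

theorem IsEGraded.weightedRank_eq (hgr : IsEGraded ε r) {x : P} {c : List P}
    (hc : IsSatChainFromMinTo x c) : weightedRank ε x = chainWeight ε c :=
  hgr.chainWeight_eq (exists_isSatChainFromMinTo x).choose_spec hc

theorem IsEGraded.weightedRank_of_isMin (hgr : IsEGraded ε r) {x : P} (hx : IsMin x) :
    weightedRank ε x = 0 :=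
  hgr.weightedRank_eq ⟨⟨by simp, List.isChain_singleton x⟩, by simpa using hx, rfl⟩

theorem IsEGraded.weightedRank_of_isMax (hgr : IsEGraded ε r) {x : P} (hx : IsMax x) :
    weightedRank ε x = r := by
  obtain ⟨hsat, hmin, hlast⟩ := (exists_isSatChainFromMinTo x).choose_spec
  exact hgr _ ⟨hsat, hmin, by simpa [hlast] using hx⟩

theorem IsEGraded.weightedRank_covBy (hgr : IsEGraded ε r) {x y : P} (hxy : x ⋖ y) :
    weightedRank ε y = weightedRank ε x + ε x y := by
  have hc := (exists_isSatChainFromMinTo x).choose_spec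
  rw [hgr.weightedRank_eq (hc.append_covBy hxy), chainWeight_append_singleton hc.2.2]
  rfl

theorem even_weightedRank_sub {μ : P → P → ℤ} (hsε : IsSignLabeling ε)
    (hsμ : IsSignLabeling μ) (x : P) : Even (weightedRank ε x - weightedRank μ x) :=
  even_chainWeight_sub hsε hsμ _ (exists_isSatChainFromMinTo x).choose_spec.1.2

end Rank

section Shift

variable [PartialOrder P] {ε μ : P → P → ℤ} {k : ℤ} {d : P → ℤ}

/-- A shift `d` with `σ ↦ σ + d` turning `(P,μ)`-partitions into `(P,ε)`-partitions and lowering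
the largest part by `k`. -/
structure IsPartitionShift (ε μ : P → P → ℤ) (k : ℤ) (d : P → ℤ) : Prop where
  covBy : ∀ x y, x ⋖ y → 2 * (d y - d x) = ε x y - μ x y
  eq_zero_of_isMax : ∀ x, IsMax x → d x = 0
  eq_neg_of_isMin : ∀ x, IsMin x → d x = -k

theorem IsPartitionShift.neg (h : IsPartitionShift ε μ k d) : IsPartitionShift μ ε (-k) (-d) where
  covBy x y hxy := by simp only [Pi.neg_apply]; linarith [h.covBy x y hxy]
  eq_zero_of_isMax x hx := by simp [h.eq_zero_of_isMax x hx]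
  eq_neg_of_isMin x hx := by simp [h.eq_neg_of_isMin x hx]

variable [Finite P]

theorem IsPPartition.le_of_isMin {σ : P → ℤ} {M : ℤ} (hσ : IsPPartition ε σ)
    (hM : ∀ m, IsMin m → σ m ≤ M) (x : P) : σ x ≤ M := by
  obtain ⟨m, hmx, hm⟩ := exists_isMin_le x
  exact (hσ.2.1 m x hmx).trans (hM m hm)

theorem IsPartitionShift.isPPartition_add (hsε : IsSignLabeling ε) (hsμ : IsSignLabeling μ)
    (h : IsPartitionShift ε μ k d) {σ : P → ℤ} (hσ : IsPPartition μ σ) :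
    IsPPartition ε (σ + d) := by
  classical
  have := Fintype.ofFinite P
  have := Fintype.toLocallyFiniteOrder (α := P)
  obtain ⟨hpos, hanti, hstrict⟩ := hσ
  have hcov : ∀ x y, x ⋖ y → σ y + d y ≤ σ x + d x ∧ (ε x y = -1 → σ y + d y < σ x + d x) := by
    intro x y hxy
    have hd := h.covBy x y hxy
    have hle := hanti x y hxy.le
    rcases hsε x y hxy with he | he <;> rcases hsμ x y hxy with hm | hm
    all_goals first
      | have := hstrict x y hxy hm; omega
      | omega
  have hanti' : Antitone (σ + d) := (antitone_iff_forall_covBy _).mpr fun x y hxy => (hcov x y hxy).1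
  refine ⟨fun x => ?_, fun x y hxy => hanti' hxy, fun x y hxy he => (hcov x y hxy).2 he⟩
  obtain ⟨m, hxm, hm⟩ := exists_le_isMax x
  have := hanti' hxm
  simp only [Pi.add_apply, h.eq_zero_of_isMax m hm] at this ⊢
  linarith [hpos m]

def IsPartitionShift.ppartitionEquiv (hsε : IsSignLabeling ε) (hsμ : IsSignLabeling μ)
    (h : IsPartitionShift ε μ k d) (M : ℤ) :
    {σ : P → ℤ // IsPPartition μ σ ∧ ∀ x, σ x ≤ M + k} ≃
      {σ : P → ℤ // IsPPartition ε σ ∧ ∀ x, σ x ≤ M} where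
  toFun σ := ⟨σ.1 + d, h.isPPartition_add hsε hsμ σ.2.1,
    (h.isPPartition_add hsε hsμ σ.2.1).le_of_isMin fun m hm => by
      simp only [Pi.add_apply, h.eq_neg_of_isMin m hm]; linarith [σ.2.2 m]⟩
  invFun σ := ⟨σ.1 + -d, h.neg.isPPartition_add hsμ hsε σ.2.1,
    (h.neg.isPPartition_add hsμ hsε σ.2.1).le_of_isMin fun m hm => by
      simp only [Pi.add_apply, h.neg.eq_neg_of_isMin m hm]; linarith [σ.2.2 m]⟩
  left_inv σ := by ext; simp
  right_inv σ := by ext; simp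

theorem IsPartitionShift.omegaCount_add {k : ℕ} (hsε : IsSignLabeling ε)
    (hsμ : IsSignLabeling μ) (h : IsPartitionShift ε μ k d) (n : ℕ) :
    OmegaCount μ (n + k) = OmegaCount ε n := by
  rw [OmegaCount, OmegaCount, Nat.cast_add]
  exact Nat.card_congr (h.ppartitionEquiv hsε hsμ n)

theorem IsPartitionShift.omegaCount_eq_zero [Nonempty P] {k n : ℕ} (hsε : IsSignLabeling ε)
    (hsμ : IsSignLabeling μ) (h : IsPartitionShift ε μ k d) (hn : n ≤ k) :
    OmegaCount μ n = 0 := by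
  rw [OmegaCount, show (n : ℤ) = (n - k : ℤ) + k by ring,
    Nat.card_congr (h.ppartitionEquiv hsε hsμ _)]
  have : IsEmpty {σ : P → ℤ // IsPPartition ε σ ∧ ∀ x, σ x ≤ (n - k : ℤ)} :=
    ⟨fun σ => by
      have x := Classical.arbitrary P
      linarith [σ.2.1.1 x, σ.2.2 x, (Nat.cast_le (α := ℤ)).mpr hn]⟩
  exact Nat.card_of_isEmpty

theorem exists_isPartitionShift {rε rμ k : ℤ} (hsε : IsSignLabeling ε) (hsμ : IsSignLabeling μ)
    (hgrε : IsEGraded ε rε) (hgrμ : IsEGraded μ rμ) (hk : 2 * k = rε - rμ) :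
    ∃ d, IsPartitionShift ε μ k d := by
  have htwo (x : P) := Int.two_mul_ediv_two_of_even (even_weightedRank_sub hsε hsμ x)
  refine ⟨fun x => (weightedRank ε x - weightedRank μ x) / 2 - k, ⟨fun x y hxy => ?_, ?_, ?_⟩⟩
  · have := hgrε.weightedRank_covBy hxy
    have := hgrμ.weightedRank_covBy hxy
    have := htwo x
    have := htwo y
    omega
  · intro x hx
    have := hgrε.weightedRank_of_isMax hx
    have := hgrμ.weightedRank_of_isMax hx
    omega
  · intro x hx
    have := hgrε.weightedRank_of_isMin hx
    have := hgrμ.weightedRank_of_isMin hx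
    omega

end Shift

theorem PowerSeries.mk_eq_X_pow_mul_mk {R : Type*} [Semiring R] {f g : ℕ → R} {k : ℕ}
    (hlt : ∀ n < k, g n = 0) (hadd : ∀ n, g (n + k) = f n) : mk g = X ^ k * mk f := by
  ext n
  rw [coeff_mk, coeff_X_pow_mul']
  split_ifs with h
  · rw [coeff_mk, ← hadd, Nat.sub_add_cancel h]
  · exact hlt n (not_le.mp h)

/-- if `P` is both `ε`-graded and `μ`-graded (WLOG `r(μ) ≤ r(ε)`),
then `W(P,μ;t) = t^((r(ε)-r(μ))/2) · W(P,ε;t)`. -/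
theorem W_polynomial_shift {P : Type*} [PartialOrder P] [Fintype P] [Nonempty P]
    (ε μ : P → P → ℤ) (hsignε : IsSignLabeling ε) (hsignμ : IsSignLabeling μ)
    (rε rμ : ℤ) (hgrε : IsEGraded ε rε) (hgrμ : IsEGraded μ rμ)
    (k : ℕ) (hk : (2 * k : ℤ) = rε - rμ)
    (Wε Wμ : Polynomial ℚ)
    (hWε : (Wε : PowerSeries ℚ) =
      PowerSeries.mk (fun n => (OmegaCount ε (n + 1) : ℚ)) *
        (1 - PowerSeries.X) ^ (Fintype.card P + 1))
    (hWμ : (Wμ : PowerSeries ℚ) =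
      PowerSeries.mk (fun n => (OmegaCount μ (n + 1) : ℚ)) *
        (1 - PowerSeries.X) ^ (Fintype.card P + 1)) :
    Wμ = X ^ k * Wε := by
  obtain ⟨d, hd⟩ := exists_isPartitionShift hsignε hsignμ hgrε hgrμ hk
  have hΩ : PowerSeries.mk (fun n => (OmegaCount μ (n + 1) : ℚ)) =
      PowerSeries.X ^ k * PowerSeries.mk (fun n => (OmegaCount ε (n + 1) : ℚ)) := by
    refine PowerSeries.mk_eq_X_pow_mul_mk (fun n hn => ?_) (fun n => ?_)
    · simp [hd.omegaCount_eq_zero hsignε hsignμ hn]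
    · rw [add_right_comm, hd.omegaCount_add hsignε hsignμ]
  apply Polynomial.coe_inj.mp
  rw [hWμ, hΩ, mul_assoc, ← hWε, Polynomial.coe_mul, Polynomial.coe_pow, Polynomial.coe_X]
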